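/- arXiv:2306.12952 — 4 statements merged into one kernel-verified Lean document; each statement's English description precedes it below -/
import Mathlib

section
/- Let ε ∈ (0,1] and λ ≥ 3. For every pair (u,v) with u ∈ C²([0,1]) satisfying u(0)=u'(0)=u(1)=u'(1)=0 and v ∈ C²([0,1]), the bilinear form satisfies the coercivity estimate B((u,v),(u,v)) ≥ ⦀(u,v)⦀², i.e. λ‖v − ε^{3/2}u''‖² + ε⁴‖v''‖² + 16‖u‖² + 4ε^{3/2}(1+ε)∫₀¹ v''(x)u(x) dx ≥ ‖u‖² + ε³‖u''‖² + ‖v‖² + ε⁴‖v''‖². -/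
/-!
Integrating by parts twice, the clamped boundary conditions on `u` turn `∫ v'' u` into `⟨v, u''⟩`.
With `s = ε^{3/2}` and `X = 2s⟨v, u''⟩`, expanding `‖v − s u''‖²` shows that the right-hand side
minus `⦀(u,v)⦀²` equals `15‖u‖² + (λ − 1)(‖v‖² + s²‖u''‖²) − (λ − 2 − 2ε) X`. Since
`|X| ≤ ‖v‖² + s²‖u''‖²` (nonnegativity of `‖v ± s u''‖²`) and `|λ − 2 − 2ε| ≤ λ − 1`, this is
nonnegative.
-/

open MeasureTheory Set Real

noncomputable section

/-- L²(0,1) inner product. -/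
def L2ip (f g : ℝ → ℝ) : ℝ := ∫ x in (0:ℝ)..1, f x * g x

/-- Square of the L²(0,1) norm. -/
def L2nsq (f : ℝ → ℝ) : ℝ := ∫ x in (0:ℝ)..1, (f x)^2

/-- k-th derivative within [0,1]. -/
def Dn (k : ℕ) (f : ℝ → ℝ) : ℝ → ℝ := iteratedDerivWithin k f (Icc (0:ℝ) 1)

/-- Square of the balanced norm. -/
def balSq (ε : ℝ) (u v : ℝ → ℝ) : ℝ :=
  L2nsq u + ε^3 * L2nsq (Dn 2 u) + L2nsq v + ε^4 * L2nsq (Dn 2 v)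

/-- Clamped boundary conditions u(0)=u'(0)=u(1)=u'(1)=0. -/
def ClampedBC (u : ℝ → ℝ) : Prop :=
  u 0 = 0 ∧ Dn 1 u 0 = 0 ∧ u 1 = 0 ∧ Dn 1 u 1 = 0

theorem ContDiffOn.hasDerivWithinAt_iteratedDerivWithin {𝕜 F : Type*}
    [NontriviallyNormedField 𝕜] [NormedAddCommGroup F] [NormedSpace 𝕜 F]
    {f : 𝕜 → F} {s : Set 𝕜} {n : WithTop ℕ∞} {k : ℕ} (hf : ContDiffOn 𝕜 n f s) (hk : k < n)
    (hs : UniqueDiffOn 𝕜 s) {x : 𝕜} (hx : x ∈ s) :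
    HasDerivWithinAt (iteratedDerivWithin k f s) (iteratedDerivWithin (k + 1) f s x) s x := by
  rw [iteratedDerivWithin_succ]
  exact (hf.differentiableOn_iteratedDerivWithin hk hs x hx).hasDerivWithinAt

theorem integral_iteratedDerivWithin_mul_iteratedDerivWithin_succ {a b : ℝ} (hab : a < b)
    {f g : ℝ → ℝ} {n : WithTop ℕ∞} {j k : ℕ}
    (hf : ContDiffOn ℝ n f (Icc a b)) (hg : ContDiffOn ℝ n g (Icc a b))
    (hj : j + 1 ≤ n) (hk : k + 1 ≤ n)
    (ha : iteratedDerivWithin j f (Icc a b) a = 0) (hb : iteratedDerivWithin j f (Icc a b) b = 0) :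
    ∫ x in a..b, iteratedDerivWithin j f (Icc a b) x * iteratedDerivWithin (k + 1) g (Icc a b) x
      = -∫ x in a..b,
          iteratedDerivWithin (j + 1) f (Icc a b) x * iteratedDerivWithin k g (Icc a b) x := by
  have hs : UniqueDiffOn ℝ (Icc a b) := uniqueDiffOn_Icc hab
  have hI : uIcc a b = Icc a b := uIcc_of_le hab.le
  have hlt : ∀ {m : ℕ}, (m + 1 : ℕ) ≤ n → (m : WithTop ℕ∞) < n := fun h =>
    lt_of_lt_of_le (by exact_mod_cast Nat.lt_succ_self _) h
  have hint : ∀ {h : ℝ → ℝ} {m : ℕ}, ContDiffOn ℝ n h (Icc a b) → (m : WithTop ℕ∞) ≤ n →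
      IntervalIntegrable (iteratedDerivWithin m h (Icc a b)) volume a b := fun hh hm =>
    (hh.continuousOn_iteratedDerivWithin hm hs).intervalIntegrable_of_Icc hab.le
  have ibp := intervalIntegral.integral_mul_deriv_eq_deriv_mul_of_hasDerivWithinAt
    (by rw [hI]; exact fun x hx => hf.hasDerivWithinAt_iteratedDerivWithin (hlt hj) hs hx)
    (by rw [hI]; exact fun x hx => hg.hasDerivWithinAt_iteratedDerivWithin (hlt hk) hs hx)
    (hint hf (by exact_mod_cast hj)) (hint hg (by exact_mod_cast hk))
  rw [ibp, ha, hb]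
  ring

theorem integral_Dn_two_mul_eq_L2ip {u v : ℝ → ℝ} (hu : ContDiffOn ℝ 2 u (Icc (0:ℝ) 1))
    (hv : ContDiffOn ℝ 2 v (Icc (0:ℝ) 1)) (hbc : ClampedBC u) :
    ∫ x in (0:ℝ)..1, Dn 2 v x * u x = L2ip v (Dn 2 u) := by
  obtain ⟨hu0, hu'0, hu1, hu'1⟩ := hbc
  have first := integral_iteratedDerivWithin_mul_iteratedDerivWithin_succ one_pos hu hv
    (j := 0) (k := 1) (by norm_num) (by norm_num) (by simpa using hu0) (by simpa using hu1)
  have second := integral_iteratedDerivWithin_mul_iteratedDerivWithin_succ one_pos hu hv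
    (j := 1) (k := 0) (by norm_num) (by norm_num) hu'0 hu'1
  simp only [iteratedDerivWithin_zero, zero_add] at first second
  simp only [Dn, L2ip, mul_comm _ (u _), mul_comm (v _), first, second, neg_neg]

theorem L2nsq_nonneg (f : ℝ → ℝ) : 0 ≤ L2nsq f :=
  intervalIntegral.integral_nonneg zero_le_one fun _ _ => sq_nonneg _

theorem L2nsq_sub_const_mul {f g : ℝ → ℝ} (hf : ContinuousOn f (Icc (0:ℝ) 1))
    (hg : ContinuousOn g (Icc (0:ℝ) 1)) (c : ℝ) :
    L2nsq (fun x => f x - c * g x) = L2nsq f - 2 * c * L2ip f g + c ^ 2 * L2nsq g := by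
  have hff : IntervalIntegrable (fun x => f x ^ 2) volume 0 1 :=
    (hf.pow 2).intervalIntegrable_of_Icc zero_le_one
  have hfg : IntervalIntegrable (fun x => 2 * c * (f x * g x)) volume 0 1 :=
    ((hf.mul hg).intervalIntegrable_of_Icc zero_le_one).const_mul _
  have hgg : IntervalIntegrable (fun x => c ^ 2 * g x ^ 2) volume 0 1 :=
    ((hg.pow 2).intervalIntegrable_of_Icc zero_le_one).const_mul _
  simp only [L2nsq, L2ip]
  rw [← intervalIntegral.integral_const_mul, ← intervalIntegral.integral_const_mul,
    ← intervalIntegral.integral_sub hff hfg, ← intervalIntegral.integral_add (hff.sub hfg) hgg]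
  congr 1
  ext x
  ring

theorem abs_two_mul_L2ip_le {f g : ℝ → ℝ} (hf : ContinuousOn f (Icc (0:ℝ) 1))
    (hg : ContinuousOn g (Icc (0:ℝ) 1)) (c : ℝ) :
    |2 * c * L2ip f g| ≤ L2nsq f + c ^ 2 * L2nsq g := by
  have hminus := L2nsq_sub_const_mul hf hg c ▸ L2nsq_nonneg fun x => f x - c * g x
  have hplus := L2nsq_sub_const_mul hf hg (-c) ▸ L2nsq_nonneg fun x => f x - -c * g x
  rw [neg_sq] at hplus
  exact abs_le.mpr ⟨by linarith, by linarith⟩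

/-- Coercivity of the bilinear form B with respect to the balanced norm. -/
theorem coercivity (ε lam : ℝ) (hε : ε ∈ Ioc (0:ℝ) 1) (hlam : 3 ≤ lam)
    (u v : ℝ → ℝ)
    (hu : ContDiffOn ℝ 2 u (Icc (0:ℝ) 1)) (hbc : ClampedBC u)
    (hv : ContDiffOn ℝ 2 v (Icc (0:ℝ) 1)) :
    balSq ε u v ≤
      lam * L2nsq (fun x => v x - ε ^ ((3:ℝ)/2) * Dn 2 u x)
        + ε^4 * L2nsq (Dn 2 v) + 16 * L2nsq u
        + 4 * ε ^ ((3:ℝ)/2) * (1 + ε) * ∫ x in (0:ℝ)..1, Dn 2 v x * u x := by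
  obtain ⟨hε0, hε1⟩ := hε
  set s := ε ^ ((3:ℝ)/2)
  have hs : s ^ 2 = ε ^ 3 := by
    rw [← rpow_natCast, ← rpow_mul hε0.le]
    norm_num
  have hcv : ContinuousOn v (Icc (0:ℝ) 1) := hv.continuousOn
  have hcu'' : ContinuousOn (Dn 2 u) (Icc (0:ℝ) 1) :=
    hu.continuousOn_iteratedDerivWithin le_rfl (uniqueDiffOn_Icc one_pos)
  have hcoef : |lam - 2 - 2 * ε| ≤ lam - 1 := abs_le.mpr ⟨by linarith, by linarith⟩
  have hcross : (lam - 2 - 2 * ε) * (2 * s * L2ip v (Dn 2 u))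
      ≤ (lam - 1) * (L2nsq v + s ^ 2 * L2nsq (Dn 2 u)) :=
    (le_abs_self _).trans <| (abs_mul _ _).trans_le <|
      mul_le_mul hcoef (abs_two_mul_L2ip_le hcv hcu'' s) (abs_nonneg _) (by linarith)
  rw [integral_Dn_two_mul_eq_L2ip hu hv hbc, L2nsq_sub_const_mul hcv hcu'', balSq, ← hs]
  linarith [L2nsq_nonneg u]
end
end

section
/- Let ε ∈ (0,1], λ ≥ 3, and let f : [0,1] → ℝ be continuous. Suppose (u₁,v₁) and (u₂,v₂) are two pairs with uᵢ ∈ C²([0,1]), uᵢ(0)=uᵢ'(0)=uᵢ(1)=uᵢ'(1)=0 and vᵢ ∈ C²([0,1]), such that for every test pair (u*,v*) (with u* ∈ C²([0,1]) vanishing with its first derivative at 0 and 1, and v* ∈ C²([0,1])) one has B((uᵢ,vᵢ),(u*,v*)) = ⟨f, ε^{3/2}v*'' + 4u*⟩ for i = 1,2. Then u₁ = u₂ and v₁ = v₂ on [0,1]. -/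
/-!
Testing the weak formulation of both solutions against the difference `(w, z) = (u₁ - u₂, v₁ - v₂)`
gives `B((w, z), (w, z)) = 0`. Because `w` is clamped, integrating by parts twice gives
`⟨z'', w⟩ = ⟨z, w''⟩`, so with `t = ε^{3/2} w''`
`B((w, z), (w, z)) = ∫ λ (z - t)² + 4 (1 + ε) z t + ε^4 z''² + 16 w²`.
For `λ ≥ 3/2 + ε` the quadratic form `λ (z - t)² + 4 (1 + ε) z t` dominates `z² + t²`, hence
`‖z‖² + 16 ‖w‖² ≤ 0`, and continuous functions with vanishing `L²` norm vanish on `[0, 1]`.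
-/

open MeasureTheory Set Real

noncomputable section

/-- The bilinear form B. -/
def Bform (ε lam : ℝ) (u v us vs : ℝ → ℝ) : ℝ :=
  lam * L2ip (fun x => v x - ε ^ ((3:ℝ)/2) * Dn 2 u x)
             (fun x => vs x - ε ^ ((3:ℝ)/2) * Dn 2 us x)
  + L2ip (fun x => ε ^ ((5:ℝ)/2) * Dn 2 v x + 4 * u x)
         (fun x => ε ^ ((3:ℝ)/2) * Dn 2 vs x + 4 * us x)

namespace WeakUniqueness

variable {f g h p q u v w z : ℝ → ℝ}

section L2ip

theorem intervalIntegrable_of_continuousOn_Icc (hf : ContinuousOn f (Icc 0 1)) :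
    IntervalIntegrable f volume 0 1 :=
  hf.intervalIntegrable_of_Icc zero_le_one

theorem L2ip_congr (hf : EqOn f g (Icc 0 1)) (hh : EqOn h p (Icc 0 1)) :
    L2ip f h = L2ip g p := by
  refine intervalIntegral.integral_congr fun x hx => ?_
  rw [uIcc_of_le zero_le_one] at hx
  simp only [hf hx, hh hx]

theorem L2ip_sub_left (hf : ContinuousOn f (Icc 0 1)) (hg : ContinuousOn g (Icc 0 1))
    (hh : ContinuousOn h (Icc 0 1)) :
    L2ip f h - L2ip g h = L2ip (f - g) h := by
  rw [L2ip, L2ip, ← intervalIntegral.integral_sub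
    (intervalIntegrable_of_continuousOn_Icc (f := fun x => f x * h x) (hf.mul hh))
    (intervalIntegrable_of_continuousOn_Icc (f := fun x => g x * h x) (hg.mul hh))]
  simp only [L2ip, Pi.sub_apply, sub_mul]

theorem L2ip_self_nonneg (f : ℝ → ℝ) : 0 ≤ L2ip f f :=
  intervalIntegral.integral_nonneg zero_le_one fun x _ => mul_self_nonneg (f x)

theorem eqOn_zero_of_L2ip_self_eq_zero (hf : ContinuousOn f (Icc 0 1)) (h0 : L2ip f f = 0) :
    EqOn f 0 (Icc 0 1) := by
  have hsq : ContinuousOn (fun x => f x * f x) (Icc 0 1) := hf.mul hf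
  have hae : (fun x => f x * f x) =ᵐ[volume.restrict (Icc 0 1)] 0 := by
    rw [← Measure.restrict_congr_set Ioc_ae_eq_Icc]
    exact (intervalIntegral.integral_eq_zero_iff_of_le_of_nonneg_ae zero_le_one
      (Filter.Eventually.of_forall fun x => mul_self_nonneg (f x))
      (intervalIntegrable_of_continuousOn_Icc hsq)).mp h0
  have hsq0 : EqOn (fun x => f x * f x) 0 (Icc 0 1) :=
    Measure.eqOn_of_ae_eq hae hsq continuousOn_const
      (by rw [interior_Icc, closure_Ioo zero_ne_one])
  exact fun x hx => mul_self_eq_zero.mp (hsq0 hx)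

end L2ip

section Dn

theorem continuousOn_Dn {n : WithTop ℕ∞} {k : ℕ} (hu : ContDiffOn ℝ n u (Icc 0 1)) (hk : k ≤ n) :
    ContinuousOn (Dn k u) (Icc 0 1) :=
  hu.continuousOn_iteratedDerivWithin hk (uniqueDiffOn_Icc one_pos)

theorem hasDerivWithinAt_Dn {n : WithTop ℕ∞} {k : ℕ} (hu : ContDiffOn ℝ n u (Icc 0 1)) (hk : k < n)
    {x : ℝ} (hx : x ∈ Icc 0 1) :
    HasDerivWithinAt (Dn k u) (Dn (k + 1) u x) (Icc 0 1) x := by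
  rw [Dn, Dn, iteratedDerivWithin_succ]
  exact (hu.differentiableOn_iteratedDerivWithin hk (uniqueDiffOn_Icc one_pos) x hx
    ).hasDerivWithinAt

theorem Dn_sub {n : WithTop ℕ∞} {k : ℕ} (hu : ContDiffOn ℝ n u (Icc 0 1))
    (hv : ContDiffOn ℝ n v (Icc 0 1)) (hk : k ≤ n) :
    EqOn (Dn k (u - v)) (Dn k u - Dn k v) (Icc 0 1) := fun x hx =>
  iteratedDerivWithin_sub hx (uniqueDiffOn_Icc one_pos) ((hu x hx).of_le hk) ((hv x hx).of_le hk)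

theorem L2ip_Dn_succ_left {k m : ℕ} (hp : ContDiffOn ℝ (k + 1) p (Icc 0 1))
    (hq : ContDiffOn ℝ (m + 1) q (Icc 0 1)) (hq0 : Dn m q 0 = 0) (hq1 : Dn m q 1 = 0) :
    L2ip (Dn (k + 1) p) (Dn m q) = -L2ip (Dn k p) (Dn (m + 1) q) := by
  have hk : ((k : WithTop ℕ∞) < k + 1) := by exact_mod_cast Nat.lt_succ_self k
  have hm : ((m : WithTop ℕ∞) < m + 1) := by exact_mod_cast Nat.lt_succ_self m
  have hparts := intervalIntegral.integral_mul_deriv_eq_deriv_mul_of_hasDerivWithinAt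
    (by rw [uIcc_of_le zero_le_one]; exact fun x hx => hasDerivWithinAt_Dn hp hk hx)
    (by rw [uIcc_of_le zero_le_one]; exact fun x hx => hasDerivWithinAt_Dn hq hm hx)
    (intervalIntegrable_of_continuousOn_Icc (continuousOn_Dn hp le_rfl))
    (intervalIntegrable_of_continuousOn_Icc (continuousOn_Dn hq le_rfl))
  rw [L2ip, L2ip, hparts, hq0, hq1]
  ring

theorem L2ip_Dn_two_symm (hz : ContDiffOn ℝ 2 z (Icc 0 1)) (hw : ContDiffOn ℝ 2 w (Icc 0 1))
    (hbc : ClampedBC w) :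
    L2ip (Dn 2 z) w = L2ip z (Dn 2 w) := by
  obtain ⟨h0, h0', h1, h1'⟩ := hbc
  have hzz : L2ip (Dn 2 z) (Dn 0 w) = -L2ip (Dn 1 z) (Dn 1 w) :=
    L2ip_Dn_succ_left (k := 1) (m := 0) hz (by simpa using hw.of_le one_le_two)
      (by simpa) (by simpa)
  have hww : L2ip (Dn 1 z) (Dn 1 w) = -L2ip (Dn 0 z) (Dn 2 w) :=
    L2ip_Dn_succ_left (k := 0) (m := 1) (by simpa using hz.of_le one_le_two) hw h0' h1'
  rw [hww, neg_neg] at hzz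
  simpa only [Dn, iteratedDerivWithin_zero] using hzz

end Dn

theorem _root_.ClampedBC.sub (hbu : ClampedBC u) (hbv : ClampedBC v)
    (hu : ContDiffOn ℝ 1 u (Icc 0 1)) (hv : ContDiffOn ℝ 1 v (Icc 0 1)) : ClampedBC (u - v) := by
  obtain ⟨hu0, hu0', hu1, hu1'⟩ := hbu
  obtain ⟨hv0, hv0', hv1, hv1'⟩ := hbv
  have hD := Dn_sub hu hv le_rfl
  refine ⟨?_, ?_, ?_, ?_⟩
  · simp [hu0, hv0]
  · simp [hD (left_mem_Icc.mpr zero_le_one), hu0', hv0']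
  · simp [hu1, hv1]
  · simp [hD (right_mem_Icc.mpr zero_le_one), hu1', hv1']

section Bform

variable {ε lam : ℝ} {u₁ v₁ u₂ v₂ us vs : ℝ → ℝ}

theorem Bform_sub_left (hu₁ : ContDiffOn ℝ 2 u₁ (Icc 0 1)) (hv₁ : ContDiffOn ℝ 2 v₁ (Icc 0 1))
    (hu₂ : ContDiffOn ℝ 2 u₂ (Icc 0 1)) (hv₂ : ContDiffOn ℝ 2 v₂ (Icc 0 1))
    (hus : ContDiffOn ℝ 2 us (Icc 0 1)) (hvs : ContDiffOn ℝ 2 vs (Icc 0 1)) :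
    Bform ε lam u₁ v₁ us vs - Bform ε lam u₂ v₂ us vs = Bform ε lam (u₁ - u₂) (v₁ - v₂) us vs := by
  have := hu₁.continuousOn; have := hv₁.continuousOn
  have := hu₂.continuousOn; have := hv₂.continuousOn
  have := hus.continuousOn; have := hvs.continuousOn
  have := continuousOn_Dn hu₁ le_rfl; have := continuousOn_Dn hv₁ le_rfl
  have := continuousOn_Dn hu₂ le_rfl; have := continuousOn_Dn hv₂ le_rfl
  have := continuousOn_Dn hus le_rfl; have := continuousOn_Dn hvs le_rfl
  have hDu := Dn_sub hu₁ hu₂ le_rfl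
  have hDv := Dn_sub hv₁ hv₂ le_rfl
  simp only [Bform]
  set a := ε ^ ((3:ℝ)/2)
  set b := ε ^ ((5:ℝ)/2)
  have h₁ : L2ip (fun x => v₁ x - a * Dn 2 u₁ x) (fun x => vs x - a * Dn 2 us x)
      - L2ip (fun x => v₂ x - a * Dn 2 u₂ x) (fun x => vs x - a * Dn 2 us x)
      = L2ip (fun x => (v₁ - v₂) x - a * Dn 2 (u₁ - u₂) x) (fun x => vs x - a * Dn 2 us x) := by
    rw [L2ip_sub_left (by fun_prop) (by fun_prop) (by fun_prop)]
    exact L2ip_congr (fun x hx => by simp only [Pi.sub_apply, hDu hx]; ring) (eqOn_refl _ _)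
  have h₂ : L2ip (fun x => b * Dn 2 v₁ x + 4 * u₁ x) (fun x => a * Dn 2 vs x + 4 * us x)
      - L2ip (fun x => b * Dn 2 v₂ x + 4 * u₂ x) (fun x => a * Dn 2 vs x + 4 * us x)
      = L2ip (fun x => b * Dn 2 (v₁ - v₂) x + 4 * (u₁ - u₂) x)
          (fun x => a * Dn 2 vs x + 4 * us x) := by
    rw [L2ip_sub_left (by fun_prop) (by fun_prop) (by fun_prop)]
    exact L2ip_congr (fun x hx => by simp only [Pi.sub_apply, hDv hx]; ring) (eqOn_refl _ _)
  linear_combination lam * h₁ + h₂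

theorem sq_add_sq_le_mul_sub_sq_add_mul (hε : 0 ≤ ε) (hlam : 2 * ε + 3 ≤ 2 * lam) (z t : ℝ) :
    z ^ 2 + t ^ 2 ≤ lam * (z - t) ^ 2 + 4 * (1 + ε) * z * t := by
  nlinarith [mul_nonneg (by linarith : 0 ≤ 1 + 2 * ε) (sq_nonneg (z + t)),
    mul_nonneg (by linarith : 0 ≤ 2 * lam - 3 - 2 * ε) (sq_nonneg (z - t))]

theorem L2ip_self_add_le_Bform_self (hε : 0 ≤ ε) (hlam : 2 * ε + 3 ≤ 2 * lam)
    (hw : ContDiffOn ℝ 2 w (Icc 0 1)) (hbc : ClampedBC w) (hz : ContDiffOn ℝ 2 z (Icc 0 1)) :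
    L2ip z z + 16 * L2ip w w ≤ Bform ε lam w z w z := by
  have hsymm := L2ip_Dn_two_symm hz hw hbc
  have hb : ε ^ ((5:ℝ)/2) = ε * ε ^ ((3:ℝ)/2) := by
    rw [show (5:ℝ)/2 = 1 + 3/2 by norm_num, rpow_add' hε (by norm_num), rpow_one]
  have := hw.continuousOn; have := hz.continuousOn
  have := continuousOn_Dn hw le_rfl; have := continuousOn_Dn hz le_rfl
  simp only [Bform, L2ip] at hsymm ⊢
  set a := ε ^ ((3:ℝ)/2)
  set b := ε ^ ((5:ℝ)/2)
  have hpt : ∀ x ∈ Icc (0:ℝ) 1, z x * z x + 16 * (w x * w x) ≤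
      lam * ((z x - a * Dn 2 w x) * (z x - a * Dn 2 w x))
        + (b * Dn 2 z x + 4 * w x) * (a * Dn 2 z x + 4 * w x)
        + 4 * (a + b) * (z x * Dn 2 w x - Dn 2 z x * w x) := fun x _ => by
    -- the last term integrates to zero by `hsymm`; with `t = a w''` and `b = ε a` the right side
    -- is `lam (z - t)² + 4 (1 + ε) z t + ε a² z''² + 16 w²`
    have := sq_add_sq_le_mul_sub_sq_add_mul hε hlam (z x) (a * Dn 2 w x)
    rw [hb]
    nlinarith [mul_nonneg (mul_nonneg hε (rpow_nonneg hε ((3:ℝ)/2)))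
      (mul_nonneg (rpow_nonneg hε ((3:ℝ)/2)) (mul_self_nonneg (Dn 2 z x))),
      sq_nonneg (a * Dn 2 w x)]
  have hint := intervalIntegral.integral_mono_on zero_le_one
    (intervalIntegrable_of_continuousOn_Icc (by fun_prop))
    (intervalIntegrable_of_continuousOn_Icc (by fun_prop)) hpt
  simp (disch := exact intervalIntegrable_of_continuousOn_Icc (by fun_prop)) only
    [intervalIntegral.integral_add, intervalIntegral.integral_sub,
      intervalIntegral.integral_const_mul] at hint
  rwa [hsymm, sub_self, mul_zero, add_zero] at hint

end Bform

end WeakUniqueness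

open WeakUniqueness

theorem weak_uniqueness_general (ε lam : ℝ) (hε : ε ∈ Ioc (0:ℝ) 1) (hlam : 3 ≤ lam)
    (f : ℝ → ℝ)
    (u₁ v₁ u₂ v₂ : ℝ → ℝ)
    (hu₁ : ContDiffOn ℝ 2 u₁ (Icc (0:ℝ) 1)) (hbc₁ : ClampedBC u₁)
    (hv₁ : ContDiffOn ℝ 2 v₁ (Icc (0:ℝ) 1))
    (hu₂ : ContDiffOn ℝ 2 u₂ (Icc (0:ℝ) 1)) (hbc₂ : ClampedBC u₂)
    (hv₂ : ContDiffOn ℝ 2 v₂ (Icc (0:ℝ) 1))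
    (hweak₁ : ∀ us vs : ℝ → ℝ,
      ContDiffOn ℝ 2 us (Icc (0:ℝ) 1) → ClampedBC us →
      ContDiffOn ℝ 2 vs (Icc (0:ℝ) 1) →
      Bform ε lam u₁ v₁ us vs
        = L2ip f (fun x => ε ^ ((3:ℝ)/2) * Dn 2 vs x + 4 * us x))
    (hweak₂ : ∀ us vs : ℝ → ℝ,
      ContDiffOn ℝ 2 us (Icc (0:ℝ) 1) → ClampedBC us →
      ContDiffOn ℝ 2 vs (Icc (0:ℝ) 1) →
      Bform ε lam u₂ v₂ us vs
        = L2ip f (fun x => ε ^ ((3:ℝ)/2) * Dn 2 vs x + 4 * us x)) :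
    EqOn u₁ u₂ (Icc (0:ℝ) 1) ∧ EqOn v₁ v₂ (Icc (0:ℝ) 1) := by
  have hw : ContDiffOn ℝ 2 (u₁ - u₂) (Icc 0 1) := hu₁.sub hu₂
  have hz : ContDiffOn ℝ 2 (v₁ - v₂) (Icc 0 1) := hv₁.sub hv₂
  have hbc := hbc₁.sub hbc₂ (hu₁.of_le one_le_two) (hu₂.of_le one_le_two)
  have hB : Bform ε lam (u₁ - u₂) (v₁ - v₂) (u₁ - u₂) (v₁ - v₂) = 0 := by
    rw [← Bform_sub_left hu₁ hv₁ hu₂ hv₂ hw hz, hweak₁ _ _ hw hbc hz, hweak₂ _ _ hw hbc hz,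
      sub_self]
  have hcoer := L2ip_self_add_le_Bform_self (lam := lam) hε.1.le (by linarith [hε.2]) hw hbc hz
  have hz0 := (L2ip_self_nonneg (v₁ - v₂)).antisymm'
    (by linarith [L2ip_self_nonneg (u₁ - u₂)])
  have hw0 := (L2ip_self_nonneg (u₁ - u₂)).antisymm'
    (by linarith [L2ip_self_nonneg (v₁ - v₂)])
  exact ⟨fun x hx => sub_eq_zero.mp (eqOn_zero_of_L2ip_self_eq_zero hw.continuousOn hw0 hx),
    fun x hx => sub_eq_zero.mp (eqOn_zero_of_L2ip_self_eq_zero hz.continuousOn hz0 hx)⟩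

/-- Uniqueness of the solution to the weak formulation. -/
theorem weak_uniqueness (ε lam : ℝ) (hε : ε ∈ Ioc (0:ℝ) 1) (hlam : 3 ≤ lam)
    (f : ℝ → ℝ) (hf : ContinuousOn f (Icc (0:ℝ) 1))
    (u₁ v₁ u₂ v₂ : ℝ → ℝ)
    (hu₁ : ContDiffOn ℝ 2 u₁ (Icc (0:ℝ) 1)) (hbc₁ : ClampedBC u₁)
    (hv₁ : ContDiffOn ℝ 2 v₁ (Icc (0:ℝ) 1))
    (hu₂ : ContDiffOn ℝ 2 u₂ (Icc (0:ℝ) 1)) (hbc₂ : ClampedBC u₂)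
    (hv₂ : ContDiffOn ℝ 2 v₂ (Icc (0:ℝ) 1))
    (hweak₁ : ∀ us vs : ℝ → ℝ,
      ContDiffOn ℝ 2 us (Icc (0:ℝ) 1) → ClampedBC us →
      ContDiffOn ℝ 2 vs (Icc (0:ℝ) 1) →
      Bform ε lam u₁ v₁ us vs
        = L2ip f (fun x => ε ^ ((3:ℝ)/2) * Dn 2 vs x + 4 * us x))
    (hweak₂ : ∀ us vs : ℝ → ℝ,
      ContDiffOn ℝ 2 us (Icc (0:ℝ) 1) → ClampedBC us →
      ContDiffOn ℝ 2 vs (Icc (0:ℝ) 1) →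
      Bform ε lam u₂ v₂ us vs
        = L2ip f (fun x => ε ^ ((3:ℝ)/2) * Dn 2 vs x + 4 * us x)) :
    EqOn u₁ u₂ (Icc (0:ℝ) 1) ∧ EqOn v₁ v₂ (Icc (0:ℝ) 1) :=
  weak_uniqueness_general ε lam hε hlam f u₁ v₁ u₂ v₂ hu₁ hbc₁ hv₁ hu₂ hbc₂ hv₂ hweak₁ hweak₂
end
end

section
/- Let p ≥ 3 be an integer, let a < b be real numbers, and let w : [a,b] → ℝ be (p+1)-times continuously differentiable. If P is a polynomial of degree at most p with P(a) = w(a), P'(a) = w'(a), and ∫_a^b (P − w)''(x) q(x) dx = 0 for every polynomial q of degree at most p−2, then also P(b) = w(b) and P'(b) = w'(b). -/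
open MeasureTheory Set Real Polynomial

noncomputable section

/-! Write `e = P - w`. Testing the orthogonality with `q = 1` gives `∫ e'' = 0`, i.e.
`e'(b) = e'(a) = 0`, and testing it with `q = b - X` gives the first-order Taylor remainder
`∫ e''(x) (b - x) dx = e(b) - e(a) - e'(a) (b - a) = e(b)`, which therefore vanishes too. -/

theorem ContDiffOn.hasDerivAt_iteratedDerivWithin {𝕜 F : Type*} [NontriviallyNormedField 𝕜]
    [NormedAddCommGroup F] [NormedSpace 𝕜 F] {f : 𝕜 → F} {s : Set 𝕜} {x : 𝕜} {n : ℕ}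
    (hf : ContDiffOn 𝕜 (n + 1 : ℕ) f s) (hs : UniqueDiffOn 𝕜 s) (hx : s ∈ nhds x) :
    HasDerivAt (iteratedDerivWithin n f s) (iteratedDerivWithin (n + 1) f s x) x := by
  have hdiff : DifferentiableOn 𝕜 (iteratedDerivWithin n f s) s :=
    hf.differentiableOn_iteratedDerivWithin (by exact_mod_cast n.lt_succ_self) hs
  rw [iteratedDerivWithin_succ]
  exact (hdiff x (mem_of_mem_nhds hx)).hasDerivWithinAt.hasDerivAt hx

section TaylorOrderOne

variable {f f' f'' : ℝ → ℝ} {a b : ℝ}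

theorem integral_mul_sub_eq_sub_sub_mul_of_hasDerivAt (hab : a ≤ b)
    (hf : ContinuousOn f (Icc a b)) (hf' : ContinuousOn f' (Icc a b))
    (hderiv : ∀ x ∈ Ioo a b, HasDerivAt f (f' x) x)
    (hderiv' : ∀ x ∈ Ioo a b, HasDerivAt f' (f'' x) x)
    (hint : IntervalIntegrable f'' volume a b) :
    ∫ x in a..b, f'' x * (b - x) = f b - f a - f' a * (b - a) := by
  have hsub : ContinuousOn (fun x : ℝ => b - x) (Icc a b) := by fun_prop
  have hint' : IntervalIntegrable (fun x => f'' x * (b - x)) volume a b :=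
    hint.mul_continuousOn (by rwa [uIcc_of_le hab])
  rw [intervalIntegral.integral_eq_sub_of_hasDerivAt_of_le (f := fun x => f x + f' x * (b - x))
    hab (hf.add (hf'.mul hsub)) (fun x hx => ?_) hint']
  · ring
  · exact ((hderiv x hx).add ((hderiv' x hx).mul ((hasDerivAt_id' x).const_sub b))).congr_deriv
      (by ring)

theorem eq_zero_and_eq_zero_of_integral_eq_zero_of_integral_mul_sub_eq_zero (hab : a ≤ b)
    (hf : ContinuousOn f (Icc a b)) (hf' : ContinuousOn f' (Icc a b))
    (hderiv : ∀ x ∈ Ioo a b, HasDerivAt f (f' x) x)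
    (hderiv' : ∀ x ∈ Ioo a b, HasDerivAt f' (f'' x) x)
    (hint : IntervalIntegrable f'' volume a b) (ha : f a = 0) (ha' : f' a = 0)
    (h₀ : ∫ x in a..b, f'' x = 0) (h₁ : ∫ x in a..b, f'' x * (b - x) = 0) :
    f b = 0 ∧ f' b = 0 := by
  rw [intervalIntegral.integral_eq_sub_of_hasDerivAt_of_le hab hf' hderiv' hint] at h₀
  rw [integral_mul_sub_eq_sub_sub_mul_of_hasDerivAt hab hf hf' hderiv hderiv' hint] at h₁
  constructor
  · rw [ha, ha'] at h₁
    linarith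
  · linarith

end TaylorOrderOne

theorem local_interpolant_right_endpoint_general (p : ℕ) (hp : 3 ≤ p) (a b : ℝ) (hab : a < b)
    (w : ℝ → ℝ) (hw : ContDiffOn ℝ (p+1 : ℕ) w (Icc a b))
    (P : Polynomial ℝ)
    (hPa : P.eval a = w a)
    (hP'a : (Polynomial.derivative P).eval a = derivWithin w (Icc a b) a)
    (horth : ∀ q : Polynomial ℝ, q.natDegree ≤ p - 2 →
      (∫ x in a..b,
        ((Polynomial.derivative (Polynomial.derivative P)).eval x
          - iteratedDerivWithin 2 w (Icc a b) x) * q.eval x) = 0) :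
    P.eval b = w b ∧ (Polynomial.derivative P).eval b = derivWithin w (Icc a b) b := by
  have hu : UniqueDiffOn ℝ (Icc a b) := uniqueDiffOn_Icc hab
  have hw₂ : ContDiffOn ℝ (1 + 1 : ℕ) w (Icc a b) := hw.of_le (by exact_mod_cast (by omega))
  have hnhds : ∀ x ∈ Ioo a b, Icc a b ∈ nhds x := fun x hx => Icc_mem_nhds hx.1 hx.2
  have hw' (x) (hx : x ∈ Ioo a b) := (hw₂.of_le (by norm_num)).hasDerivAt_iteratedDerivWithin
    (n := 0) hu (hnhds x hx)
  have hw'' (x) (hx : x ∈ Ioo a b) := hw₂.hasDerivAt_iteratedDerivWithin hu (hnhds x hx)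
  simp only [iteratedDerivWithin_zero, zero_add, iteratedDerivWithin_one] at hw' hw''
  have hw'c : ContinuousOn (derivWithin w (Icc a b)) (Icc a b) := by
    simpa using hw₂.continuousOn_iteratedDerivWithin (m := 1) (by norm_num) hu
  have hw''c : ContinuousOn (iteratedDerivWithin 2 w (Icc a b)) (Icc a b) :=
    hw₂.continuousOn_iteratedDerivWithin (by norm_num) hu
  have hdegX : (C b - X).natDegree ≤ p - 2 := by
    rw [← neg_sub, natDegree_neg]
    exact (natDegree_X_sub_C_le b).trans (by omega)
  have h₀ := horth 1 (by simp)
  have h₁ := horth (C b - X) hdegX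
  simp only [eval_one, mul_one, eval_sub, eval_C, eval_X] at h₀ h₁
  have := eq_zero_and_eq_zero_of_integral_eq_zero_of_integral_mul_sub_eq_zero hab.le
    (P.continuousOn.sub hw.continuousOn) ((derivative P).continuousOn.sub hw'c)
    (fun x hx => (P.hasDerivAt x).sub (hw' x hx))
    (fun x hx => ((derivative P).hasDerivAt x).sub (hw'' x hx))
    (((derivative (derivative P)).continuousOn.sub hw''c).intervalIntegrable_of_Icc hab.le)
    (by simp [hPa]) (by simp [hP'a]) h₀ h₁
  simpa only [Pi.sub_apply, sub_eq_zero] using this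

/-- The local interpolant automatically matches w and w' at the right endpoint b. -/
theorem local_interpolant_right_endpoint (p : ℕ) (hp : 3 ≤ p) (a b : ℝ) (hab : a < b)
    (w : ℝ → ℝ) (hw : ContDiffOn ℝ (p+1 : ℕ) w (Icc a b))
    (P : Polynomial ℝ) (hdeg : P.natDegree ≤ p)
    (hPa : P.eval a = w a)
    (hP'a : (Polynomial.derivative P).eval a = derivWithin w (Icc a b) a)
    (horth : ∀ q : Polynomial ℝ, q.natDegree ≤ p - 2 →
      (∫ x in a..b,
        ((Polynomial.derivative (Polynomial.derivative P)).eval x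
          - iteratedDerivWithin 2 w (Icc a b) x) * q.eval x) = 0) :
    P.eval b = w b ∧ (Polynomial.derivative P).eval b = derivWithin w (Icc a b) b :=
  local_interpolant_right_endpoint_general p hp a b hab w hw P hPa hP'a horth
end
end

section
/- Let p ≥ 3 be an integer. There exists a constant C > 0 depending only on p with the following property: for all real a < b with h := b − a and every (p+1)-times continuously differentiable w : [a,b] → ℝ, the polynomial P of degree at most p determined by P(a) = w(a), P'(a) = w'(a) and ∫_a^b (P−w)'' q = 0 for all polynomials q of degree at most p−2 satisfies ‖(P − w)^{(κ)}‖_{L²(a,b)} ≤ C h^{p+1−κ} ‖w^{(p+1)}‖_{L²(a,b)} for κ = 0, 1, 2, where ‖f‖_{L²(a,b)} = (∫_a^b f(x)² dx)^{1/2}. -/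
/-!
The error `e = P - w` satisfies `e(a) = e'(a) = 0`, so the Poincaré inequality
`‖F‖ ≤ h ‖F'‖` for functions vanishing at `a` (with `‖·‖` the L²(a,b) norm) reduces `κ = 0, 1`
to `κ = 2`. The orthogonality condition makes `P''` the best L²(a,b)-approximation of `w''` by
polynomials of degree at most `p - 2`, so `‖e''‖` is at most the distance from `w''` to its
Taylor polynomial of degree `p - 2` at `a`. Iterating the Poincaré inequality along the Taylor
remainders `R_n u = u - T_n u`, which satisfy `(R_{n+1} u)' = R_n u'` and `R_n u (a) = 0`, bounds
that distance by `h ^ (p - 1) ‖w^(p+1)‖`. Hence `C = 1` works.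
-/

open MeasureTheory Set Real Polynomial

section Calculus

variable {𝕜 F : Type*} [NontriviallyNormedField 𝕜] [NormedAddCommGroup F] [NormedSpace 𝕜 F]

theorem iteratedDerivWithin_iteratedDerivWithin (m k : ℕ) (f : 𝕜 → F) (s : Set 𝕜) :
    iteratedDerivWithin m (iteratedDerivWithin k f s) s = iteratedDerivWithin (m + k) f s := by
  have h (n : ℕ) (g : 𝕜 → F) : iteratedDerivWithin n g s = (fun g => derivWithin g s)^[n] g :=
    funext fun _ => iteratedDerivWithin_eq_iterate
  rw [h, h, h, Function.iterate_add_apply]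

theorem ContDiffOn.iteratedDerivWithin_of_add {f : 𝕜 → F} {s : Set 𝕜} {m k : ℕ}
    (hf : ContDiffOn 𝕜 (m + k : ℕ) f s) (hs : UniqueDiffOn 𝕜 s) :
    ContDiffOn 𝕜 m (iteratedDerivWithin k f s) s := by
  induction k generalizing m with
  | zero => simpa using hf
  | succ k ih =>
    rw [iteratedDerivWithin_succ]
    exact (ih (m := m + 1) (by rwa [show m + 1 + k = m + (k + 1) by omega])).derivWithin hs
      (by norm_cast)

theorem Polynomial.iteratedDerivWithin_eval (P : 𝕜[X]) (n : ℕ) {s : Set 𝕜}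
    (hs : UniqueDiffOn 𝕜 s) {x : 𝕜} (hx : x ∈ s) :
    iteratedDerivWithin n (fun y => P.eval y) s x = (derivative^[n] P).eval x := by
  induction n generalizing P with
  | zero => simp
  | succ n ih =>
    rw [iteratedDerivWithin_succ', Function.iterate_succ_apply,
      iteratedDerivWithin_congr (fun y hy => P.derivWithin (hs y hy)) hx, ih]

theorem iteratedDerivWithin_eval_sub (P : 𝕜[X]) {w : 𝕜 → 𝕜} {s : Set 𝕜} {x : 𝕜} {m : ℕ}
    (hs : UniqueDiffOn 𝕜 s) (hx : x ∈ s)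
    (hw : ContDiffWithinAt 𝕜 m w s x) :
    iteratedDerivWithin m (fun y => P.eval y - w y) s x =
      (derivative^[m] P).eval x - iteratedDerivWithin m w s x := by
  have hP : ContDiff 𝕜 m (fun y => P.eval y) := P.contDiff_aeval m
  rw [← P.iteratedDerivWithin_eval m hs hx]
  exact iteratedDerivWithin_sub hx hs hP.contDiffWithinAt hw

end Calculus

theorem continuous_taylorWithinEval {E : Type*} [NormedAddCommGroup E] [NormedSpace ℝ E]
    (f : ℝ → E) (n : ℕ) (s : Set ℝ) (x₀ : ℝ) :
    Continuous (taylorWithinEval f n s x₀) := by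
  cases n with
  | zero => exact continuous_const.congr fun x => (taylor_within_zero_eval f s x₀ x).symm
  | succ n => exact continuous_iff_continuousAt.2 fun x =>
      (hasDerivAt_taylorWithinEval_succ (x := x) f n).continuousAt

theorem Polynomial.exists_natDegree_le_eval_eq_taylorWithinEval (f : ℝ → ℝ) (n : ℕ) (s : Set ℝ)
    (x₀ : ℝ) : ∃ Q : ℝ[X], Q.natDegree ≤ n ∧ ∀ x, Q.eval x = taylorWithinEval f n s x₀ x := by
  refine ⟨∑ k ∈ Finset.range (n + 1), C (taylorCoeffWithin f k s x₀) * (X - C x₀) ^ k,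
    natDegree_sum_le_of_forall_le _ _ fun k hk => ?_, fun x => ?_⟩
  · refine (natDegree_C_mul_le _ _).trans ?_
    rw [natDegree_pow, natDegree_X_sub_C, mul_one]
    exact Nat.lt_succ_iff.1 (Finset.mem_range.1 hk)
  · simp only [taylor_within_apply, eval_finsetSum, eval_mul, eval_C, eval_pow, eval_sub, eval_X,
      taylorCoeffWithin, smul_eq_mul]
    exact Finset.sum_congr rfl fun k _ => by ring

noncomputable def intervalL2Norm (a b : ℝ) (f : ℝ → ℝ) : ℝ :=
  √(∫ x in a..b, f x ^ 2)

section IntervalL2Norm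

variable {a b : ℝ} {f g : ℝ → ℝ}

theorem intervalL2Norm_nonneg : 0 ≤ intervalL2Norm a b f :=
  Real.sqrt_nonneg _

theorem intervalL2Norm_congr (hab : a ≤ b) (h : EqOn f g (Icc a b)) :
    intervalL2Norm a b f = intervalL2Norm a b g := by
  unfold intervalL2Norm
  congr 1
  refine intervalIntegral.integral_congr fun x hx => ?_
  rw [uIcc_of_le hab] at hx
  simp only [h hx]

theorem sq_intervalL2Norm (hab : a ≤ b) : intervalL2Norm a b f ^ 2 = ∫ x in a..b, f x ^ 2 :=
  Real.sq_sqrt (intervalIntegral.integral_nonneg hab fun _ _ => sq_nonneg _)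

theorem integral_mul_le_intervalL2Norm_mul (hab : a ≤ b) (hf : ContinuousOn f (Icc a b))
    (hg : ContinuousOn g (Icc a b)) :
    ∫ x in a..b, f x * g x ≤ intervalL2Norm a b f * intervalL2Norm a b g := by
  have hint {u : ℝ → ℝ} (hu : ContinuousOn u (Icc a b)) : IntervalIntegrable u volume a b :=
    hu.intervalIntegrable_of_Icc hab
  set A := ∫ x in a..b, f x ^ 2
  set B := ∫ x in a..b, f x * g x
  set D := ∫ x in a..b, g x ^ 2
  -- the quadratic `t ↦ ∫ (f + t g)²` is nonnegative, so its discriminant is not positive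
  have hquad : ∀ t : ℝ, 0 ≤ D * (t * t) + 2 * B * t + A := by
    intro t
    have hexpand : ∫ x in a..b, (f x + t * g x) ^ 2 = D * (t * t) + 2 * B * t + A := by
      have hff : IntervalIntegrable (fun x => f x ^ 2) volume a b := hint (hf.pow 2)
      have hfg : IntervalIntegrable (fun x => f x * g x) volume a b := hint (hf.mul hg)
      have hgg : IntervalIntegrable (fun x => g x ^ 2) volume a b := hint (hg.pow 2)
      simp_rw [show ∀ x, (f x + t * g x) ^ 2 = t * t * g x ^ 2 + 2 * t * (f x * g x) + f x ^ 2
        from fun x => by ring]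
      rw [intervalIntegral.integral_add ((hgg.const_mul _).add (hfg.const_mul _)) hff,
        intervalIntegral.integral_add (hgg.const_mul _) (hfg.const_mul _),
        intervalIntegral.integral_const_mul,
        intervalIntegral.integral_const_mul]
      ring
    exact hexpand ▸ intervalIntegral.integral_nonneg hab fun _ _ => sq_nonneg _
  have hdisc := discrim_le_zero hquad
  rw [discrim] at hdisc
  have hB : B ^ 2 ≤ (intervalL2Norm a b f * intervalL2Norm a b g) ^ 2 := by
    rw [mul_pow, sq_intervalL2Norm hab, sq_intervalL2Norm hab]
    nlinarith
  exact abs_le_of_sq_le_sq' hB (mul_nonneg intervalL2Norm_nonneg intervalL2Norm_nonneg) |>.2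

theorem intervalL2Norm_le_of_integral_mul_add_eq_zero (hab : a ≤ b)
    (hf : ContinuousOn f (Icc a b)) (hg : ContinuousOn g (Icc a b))
    (horth : ∫ x in a..b, f x * (f x + g x) = 0) :
    intervalL2Norm a b f ≤ intervalL2Norm a b g := by
  have hsq : intervalL2Norm a b f ^ 2 ≤ intervalL2Norm a b f * intervalL2Norm a b g := calc
    intervalL2Norm a b f ^ 2 = -∫ x in a..b, f x * g x := by
      rw [sq_intervalL2Norm hab, ← sub_eq_zero, sub_neg_eq_add, ← horth,
        ← intervalIntegral.integral_add (f := fun x => f x ^ 2) (g := fun x => f x * g x)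
          ((hf.pow 2).intervalIntegrable_of_Icc hab) ((hf.mul hg).intervalIntegrable_of_Icc hab)]
      simp only [mul_add, sq]
    _ ≤ intervalL2Norm a b f * intervalL2Norm a b g := by
      simpa [intervalL2Norm, intervalIntegral.integral_neg] using
        integral_mul_le_intervalL2Norm_mul hab hf hg.neg
  nlinarith [intervalL2Norm_nonneg (a := a) (b := b) (f := f),
    intervalL2Norm_nonneg (a := a) (b := b) (f := g)]

end IntervalL2Norm

section Poincare

variable {a b : ℝ}

theorem DifferentiableOn.hasDerivAt_derivWithin_Icc {f : ℝ → ℝ}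
    (hf : DifferentiableOn ℝ f (Icc a b)) {x : ℝ} (hx : x ∈ Ioo a b) :
    HasDerivAt f (derivWithin f (Icc a b) x) x :=
  (hf x (Ioo_subset_Icc_self hx)).hasDerivWithinAt.hasDerivAt (Icc_mem_nhds hx.1 hx.2)

theorem intervalL2Norm_le_of_hasDerivAt {F g : ℝ → ℝ} (hab : a ≤ b)
    (hF : ContinuousOn F (Icc a b)) (hg : ContinuousOn g (Icc a b)) (hFa : F a = 0)
    (hderiv : ∀ x ∈ Ioo a b, HasDerivAt F (g x) x) :
    intervalL2Norm a b F ≤ (b - a) * intervalL2Norm a b g := by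
  set M := intervalL2Norm a b g
  have hL1 : ∫ x in a..b, |g x| ≤ √(b - a) * M := calc
    ∫ x in a..b, |g x| = ∫ x in a..b, 1 * |g x| := by simp only [one_mul]
    _ ≤ intervalL2Norm a b (fun _ => 1) * intervalL2Norm a b (fun x => |g x|) :=
      integral_mul_le_intervalL2Norm_mul hab continuousOn_const hg.abs
    _ = √(b - a) * M := by simp [intervalL2Norm, M, sq_abs]
  have hpoint : ∀ x ∈ Icc a b, F x ^ 2 ≤ (b - a) * M ^ 2 := by
    intro x hx
    have hFx : F x = ∫ t in a..x, g t := by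
      rw [intervalIntegral.integral_eq_sub_of_hasDeriv_right_of_le hx.1
        (hF.mono (Icc_subset_Icc_right hx.2))
        (fun t ht => (hderiv t ⟨ht.1, ht.2.trans_le hx.2⟩).hasDerivWithinAt)
        ((hg.mono (Icc_subset_Icc_right hx.2)).intervalIntegrable_of_Icc hx.1), hFa, sub_zero]
    have habs : |F x| ≤ √(b - a) * M := calc
      |F x| ≤ ∫ t in a..x, |g t| := hFx ▸ intervalIntegral.abs_integral_le_integral_abs hx.1
      _ ≤ ∫ t in a..b, |g t| :=
        intervalIntegral.integral_mono_interval le_rfl hx.1 hx.2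
          (Filter.Eventually.of_forall fun t => abs_nonneg _)
          (hg.abs.intervalIntegrable_of_Icc hab)
      _ ≤ √(b - a) * M := hL1
    calc F x ^ 2 = |F x| ^ 2 := (sq_abs _).symm
      _ ≤ (√(b - a) * M) ^ 2 := pow_le_pow_left₀ (abs_nonneg _) habs 2
      _ = (b - a) * M ^ 2 := by rw [mul_pow, Real.sq_sqrt (sub_nonneg.2 hab)]
  have hint : ∫ x in a..b, F x ^ 2 ≤ ((b - a) * M) ^ 2 := calc
    ∫ x in a..b, F x ^ 2 ≤ ∫ x in a..b, (b - a) * M ^ 2 :=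
      intervalIntegral.integral_mono_on hab ((hF.pow 2).intervalIntegrable_of_Icc hab)
        intervalIntegrable_const hpoint
    _ = ((b - a) * M) ^ 2 := by simp only [intervalIntegral.integral_const, smul_eq_mul]; ring
  exact (Real.sqrt_le_sqrt hint).trans_eq
    (Real.sqrt_sq (mul_nonneg (sub_nonneg.2 hab) intervalL2Norm_nonneg))

theorem intervalL2Norm_iteratedDerivWithin_le {u : ℝ → ℝ} {n j : ℕ} (hab : a < b)
    (hu : ContDiffOn ℝ n u (Icc a b)) (hj : j < n)
    (hja : iteratedDerivWithin j u (Icc a b) a = 0) :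
    intervalL2Norm a b (iteratedDerivWithin j u (Icc a b)) ≤
      (b - a) * intervalL2Norm a b (iteratedDerivWithin (j + 1) u (Icc a b)) := by
  have hs := uniqueDiffOn_Icc hab
  refine intervalL2Norm_le_of_hasDerivAt hab.le
    (hu.continuousOn_iteratedDerivWithin (by exact_mod_cast hj.le) hs)
    (hu.continuousOn_iteratedDerivWithin (by exact_mod_cast hj) hs) hja fun x hx => ?_
  rw [iteratedDerivWithin_succ]
  exact (hu.differentiableOn_iteratedDerivWithin (by exact_mod_cast hj) hs).hasDerivAt_derivWithin_Icc
    hx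

theorem intervalL2Norm_sub_taylorWithinEval_le {u : ℝ → ℝ} (hab : a < b) (n : ℕ)
    (hu : ContDiffOn ℝ (n + 1 : ℕ) u (Icc a b)) :
    intervalL2Norm a b (fun x => u x - taylorWithinEval u n (Icc a b) a x) ≤
      (b - a) ^ (n + 1) * intervalL2Norm a b (iteratedDerivWithin (n + 1) u (Icc a b)) := by
  have hs := uniqueDiffOn_Icc hab
  induction n generalizing u with
  | zero =>
    simp only [taylor_within_zero_eval, zero_add, pow_one, iteratedDerivWithin_one]
    exact intervalL2Norm_le_of_hasDerivAt hab.le (hu.continuousOn.sub continuousOn_const)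
      (hu.continuousOn_derivWithin hs le_rfl) (sub_self _)
      fun x hx => ((hu.differentiableOn one_ne_zero).hasDerivAt_derivWithin_Icc hx).sub_const _
  | succ n ih =>
    set s := Icc a b
    have hu' : ContDiffOn ℝ (n + 1 : ℕ) (derivWithin u s) s := hu.derivWithin hs (by norm_cast)
    calc intervalL2Norm a b (fun x => u x - taylorWithinEval u (n + 1) s a x)
        ≤ (b - a) * intervalL2Norm a b
            (fun x => derivWithin u s x - taylorWithinEval (derivWithin u s) n s a x) :=
          intervalL2Norm_le_of_hasDerivAt hab.le
            (hu.continuousOn.sub (continuous_taylorWithinEval _ _ _ _).continuousOn)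
            (hu'.continuousOn.sub (continuous_taylorWithinEval _ _ _ _).continuousOn)
            (by simp only [taylorWithinEval_self, sub_self])
            fun x hx => ((hu.differentiableOn (by simp)).hasDerivAt_derivWithin_Icc hx).sub
              (hasDerivAt_taylorWithinEval_succ u n)
      _ ≤ (b - a) * ((b - a) ^ (n + 1) *
            intervalL2Norm a b (iteratedDerivWithin (n + 1) (derivWithin u s) s)) :=
          mul_le_mul_of_nonneg_left (ih hu') (sub_nonneg.2 hab.le)
      _ = (b - a) ^ (n + 1 + 1) *
            intervalL2Norm a b (iteratedDerivWithin (n + 1 + 1) u s) := by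
          rw [← iteratedDerivWithin_succ']; ring

theorem intervalL2Norm_eval_sub_le_of_orthogonal {u : ℝ → ℝ} {R : ℝ[X]} (hab : a < b) (n : ℕ)
    (hu : ContDiffOn ℝ (n + 1 : ℕ) u (Icc a b)) (hR : R.natDegree ≤ n)
    (horth : ∀ q : ℝ[X], q.natDegree ≤ n → ∫ x in a..b, (R.eval x - u x) * q.eval x = 0) :
    intervalL2Norm a b (fun x => R.eval x - u x) ≤
      (b - a) ^ (n + 1) * intervalL2Norm a b (iteratedDerivWithin (n + 1) u (Icc a b)) := by
  obtain ⟨Q, hQdeg, hQ⟩ := exists_natDegree_le_eval_eq_taylorWithinEval u n (Icc a b) a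
  refine le_trans ?_ (intervalL2Norm_sub_taylorWithinEval_le hab n hu)
  refine intervalL2Norm_le_of_integral_mul_add_eq_zero hab.le (R.continuousOn.sub hu.continuousOn)
    (hu.continuousOn.sub (continuous_taylorWithinEval _ _ _ _).continuousOn) ?_
  rw [← horth (R - Q) ((natDegree_sub_le _ _).trans (max_le hR hQdeg))]
  congr 1 with x
  rw [eval_sub, hQ]
  ring

end Poincare

/-- L² interpolation error estimates for the local interpolant:
‖(P − w)^{(κ)}‖_{L²(a,b)} ≤ C h^{p+1−κ} ‖w^{(p+1)}‖_{L²(a,b)} for κ = 0,1,2. -/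
theorem local_interpolant_error (p : ℕ) (hp : 3 ≤ p) :
    ∃ C > 0, ∀ a b : ℝ, a < b →
      ∀ w : ℝ → ℝ, ContDiffOn ℝ (p+1 : ℕ) w (Icc a b) →
      ∀ P : Polynomial ℝ, P.natDegree ≤ p →
        P.eval a = w a →
        (Polynomial.derivative P).eval a = derivWithin w (Icc a b) a →
        (∀ q : Polynomial ℝ, q.natDegree ≤ p - 2 →
          (∫ x in a..b,
            ((Polynomial.derivative (Polynomial.derivative P)).eval x
              - iteratedDerivWithin 2 w (Icc a b) x) * q.eval x) = 0) →
        ∀ κ : ℕ, κ ≤ 2 →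
          Real.sqrt (∫ x in a..b,
              (iteratedDerivWithin κ (fun x => P.eval x - w x) (Icc a b) x)^2)
            ≤ C * (b - a)^(p + 1 - κ) *
              Real.sqrt (∫ x in a..b, (iteratedDerivWithin (p+1) w (Icc a b) x)^2) := by
  refine ⟨1, one_pos, fun a b hab w hw P hdeg hPa hP'a horth κ hκ => ?_⟩
  set s := Icc a b
  have hs : UniqueDiffOn ℝ s := uniqueDiffOn_Icc hab
  have hba : 0 ≤ b - a := sub_nonneg.2 hab.le
  set e : ℝ → ℝ := fun x => P.eval x - w x
  have he : ContDiffOn ℝ (p + 1 : ℕ) e s :=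
    (P.contDiff_aeval _ : ContDiff ℝ (p + 1 : ℕ) fun x => P.eval x).contDiffOn.sub hw
  have he_iter {m : ℕ} (hm : m ≤ p + 1) {x : ℝ} (hx : x ∈ s) :
      iteratedDerivWithin m e s x = (derivative^[m] P).eval x - iteratedDerivWithin m w s x :=
    iteratedDerivWithin_eval_sub P hs hx ((hw.of_le (by exact_mod_cast hm)) x hx)
  -- `e'' = P'' - w''` on `[a, b]`, and `P''` is the L²-projection of `w''`
  have h2 := intervalL2Norm_eval_sub_le_of_orthogonal hab (p - 2)
    (ContDiffOn.iteratedDerivWithin_of_add (by rwa [show p - 2 + 1 + 2 = p + 1 by omega]) hs)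
    ((natDegree_iterate_derivative P 2).trans (Nat.sub_le_sub_right hdeg 2)) horth
  rw [iteratedDerivWithin_iteratedDerivWithin, show p - 2 + 1 + 2 = p + 1 by omega,
    ← intervalL2Norm_congr hab.le fun x hx => he_iter (by omega) hx] at h2
  have h1 := (intervalL2Norm_iteratedDerivWithin_le hab he (j := 1) (by omega) (by
    rw [he_iter (by omega) (left_mem_Icc.2 hab.le), iteratedDerivWithin_one]
    simpa using sub_eq_zero.2 hP'a)).trans (mul_le_mul_of_nonneg_left h2 hba)
  have h0 := (intervalL2Norm_iteratedDerivWithin_le hab he (j := 0) (by omega) (by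
    simpa [e] using sub_eq_zero.2 hPa)).trans (mul_le_mul_of_nonneg_left h1 hba)
  obtain ⟨k, rfl⟩ : ∃ k, p = k + 2 := ⟨p - 2, by omega⟩
  rw [Nat.add_sub_cancel] at h0 h1 h2
  change intervalL2Norm a b _ ≤ 1 * (b - a) ^ _ * intervalL2Norm a b _
  rw [one_mul]
  interval_cases κ
  · exact h0.trans_eq (by rw [Nat.sub_zero]; ring)
  · exact h1.trans_eq (by rw [Nat.add_sub_cancel]; ring)
  · exact h2.trans_eq (by rw [show k + 2 + 1 - 2 = k + 1 by omega])
end
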